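/- arXiv:2210.06545 — 3 statements merged into one kernel-verified Lean document; each statement's English description precedes it below -/
import Mathlib

section
/- Let X, X′ be i.i.d. random vectors and φ: R^d → R^k, ψ: R^d → R^ℓ centered representation maps. For λ ≥ 0, E[(φ(X)ᵀ(Σ_φ+λI)⁻¹φ(X′) − ψ(X)ᵀ(Σ_ψ+λI)⁻¹ψ(X′))²] = tr(Σ_φ^{-λ}Σ_φΣ_φ^{-λ}Σ_φ) + tr(Σ_ψ^{-λ}Σ_ψΣ_ψ^{-λ}Σ_ψ) − 2 tr(Σ_φ^{-λ}Σ_{φψ}Σ_ψ^{-λ}Σ_{φψ}ᵀ), where Σ_f^{-λ} = (Σ_f + λI)⁻¹ and Σ_{φψ} = E[φ(X)ψ(X)ᵀ]. -/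
/-!
Expanding the square leaves three integrals over `μ ⊗ μ` of products of two bilinear forms,
`(xᵀ B y) (x'ᵀ C y')` with `x, x'` read off the first and `y, y'` off the second coordinate.
Written out in coordinates, every summand splits into a function of the first coordinate times
one of the second, so by Fubini its integral is a product of two second moments, and the resulting
quadruple sum is `tr (Bᵀ M C Nᵀ)` for the cross-moment matrices `M, N`. Since `Σ_φ`, `Σ_ψ`
and hence `(Σ + λ I)⁻¹` are symmetric, the three traces take the stated form.
-/

open MeasureTheory Matrix

section BilinearForms

variable {m n m' n' : Type*} [Fintype m] [Fintype n] [Fintype m'] [Fintype n']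

lemma dotProduct_mulVec_eq_sum (x : m → ℝ) (y : n → ℝ) (B : Matrix m n ℝ) :
    x ⬝ᵥ B *ᵥ y = ∑ p : m × n, B p.1 p.2 * (x p.1 * y p.2) := by
  simp only [dotProduct, mulVec, Finset.mul_sum, Fintype.sum_prod_type]
  exact Finset.sum_congr rfl fun i _ => Finset.sum_congr rfl fun j _ => by ring

lemma dotProduct_mulVec_mul_dotProduct_mulVec (x : m → ℝ) (y : n → ℝ) (x' : m' → ℝ)
    (y' : n' → ℝ) (B : Matrix m n ℝ) (C : Matrix m' n' ℝ) :
    (x ⬝ᵥ B *ᵥ y) * (x' ⬝ᵥ C *ᵥ y') =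
      ∑ q : (m × n) × (m' × n'), B q.1.1 q.1.2 * C q.2.1 q.2.2 *
        ((x q.1.1 * x' q.2.1) * (y q.1.2 * y' q.2.2)) := by
  rw [dotProduct_mulVec_eq_sum, dotProduct_mulVec_eq_sum, Finset.sum_mul_sum,
    ← Finset.sum_product']
  exact Finset.sum_congr rfl fun q _ => by ring

lemma sum_mul_mul_eq_trace (B : Matrix m n ℝ) (C : Matrix m' n' ℝ) (M : Matrix m m' ℝ)
    (N : Matrix n' n ℝ) :
    ∑ q : (m × n) × (m' × n'), B q.1.1 q.1.2 * C q.2.1 q.2.2 * (M q.1.1 q.2.1 * N q.2.2 q.1.2) =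
      trace (Bᵀ * M * C * N) := by
  simp only [trace, diag_apply, mul_apply, transpose_apply, Finset.sum_mul, Fintype.sum_prod_type]
  rw [Finset.sum_comm]
  refine Finset.sum_congr rfl fun j _ => ?_
  rw [Finset.sum_comm_cycle]
  refine Finset.sum_congr rfl fun j' _ => ?_
  rw [Finset.sum_comm]
  exact Finset.sum_congr rfl fun i' _ => Finset.sum_congr rfl fun i _ => by ring

end BilinearForms

section CrossMoment

variable {α β m n m' n' : Type*} [MeasurableSpace α] [MeasurableSpace β]

noncomputable def crossMoment (μ : Measure α) (f : α → m → ℝ) (g : α → n → ℝ) : Matrix m n ℝ :=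
  Matrix.of fun i j => ∫ a, f a i * g a j ∂μ

lemma isSymm_crossMoment_self (μ : Measure α) (f : α → m → ℝ) : (crossMoment μ f f).IsSymm := by
  ext i j
  simp only [crossMoment, transpose_apply, of_apply, mul_comm]

variable {μ : Measure α} {ν : Measure β}

lemma integrable_mul_mul_prod_of_memLp_two {u u' : α → ℝ} {v v' : β → ℝ} (hu : MemLp u 2 μ)
    (hu' : MemLp u' 2 μ) (hv : MemLp v 2 ν) (hv' : MemLp v' 2 ν) :
    Integrable (fun p : α × β => (u p.1 * u' p.1) * (v p.2 * v' p.2)) (μ.prod ν) :=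
  (hu.integrable_mul hu').mul_prod (hv.integrable_mul hv')

variable [Fintype m] [Fintype n] [Fintype m'] [Fintype n']
  {f : α → m → ℝ} {f' : α → m' → ℝ} {g : β → n → ℝ} {g' : β → n' → ℝ}

lemma integrable_dotProduct_mulVec_mul_dotProduct_mulVec
    (hf : ∀ i, MemLp (fun a => f a i) 2 μ) (hf' : ∀ i, MemLp (fun a => f' a i) 2 μ)
    (hg : ∀ j, MemLp (fun b => g b j) 2 ν) (hg' : ∀ j, MemLp (fun b => g' b j) 2 ν)
    (B : Matrix m n ℝ) (C : Matrix m' n' ℝ) :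
    Integrable (fun p : α × β => (f p.1 ⬝ᵥ B *ᵥ g p.2) * (f' p.1 ⬝ᵥ C *ᵥ g' p.2)) (μ.prod ν) := by
  simp only [dotProduct_mulVec_mul_dotProduct_mulVec]
  exact integrable_finsetSum _ fun q _ =>
    (integrable_mul_mul_prod_of_memLp_two (hf _) (hf' _) (hg _) (hg' _)).const_mul _

lemma integral_dotProduct_mulVec_mul_dotProduct_mulVec [SFinite μ] [SFinite ν]
    (hf : ∀ i, MemLp (fun a => f a i) 2 μ) (hf' : ∀ i, MemLp (fun a => f' a i) 2 μ)
    (hg : ∀ j, MemLp (fun b => g b j) 2 ν) (hg' : ∀ j, MemLp (fun b => g' b j) 2 ν)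
    (B : Matrix m n ℝ) (C : Matrix m' n' ℝ) :
    ∫ p : α × β, (f p.1 ⬝ᵥ B *ᵥ g p.2) * (f' p.1 ⬝ᵥ C *ᵥ g' p.2) ∂(μ.prod ν) =
      trace (Bᵀ * crossMoment μ f f' * C * (crossMoment ν g g')ᵀ) := by
  simp only [dotProduct_mulVec_mul_dotProduct_mulVec]
  rw [integral_finsetSum _ fun q _ => (integrable_mul_mul_prod_of_memLp_two (hf q.1.1)
    (hf' q.2.1) (hg q.1.2) (hg' q.2.2)).const_mul _, ← sum_mul_mul_eq_trace]
  refine Finset.sum_congr rfl fun q _ => ?_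
  rw [integral_const_mul]
  exact congrArg _ (integral_prod_mul (fun a => f a _ * f' a _) (fun b => g b _ * g' b _))

end CrossMoment

theorem stmt2_general {Ω : Type*} [MeasurableSpace Ω] (μ : Measure Ω) [IsProbabilityMeasure μ]
    {d k l : ℕ} (X : Ω → (Fin d → ℝ))
    (φ : (Fin d → ℝ) → (Fin k → ℝ)) (ψ : (Fin d → ℝ) → (Fin l → ℝ))
    (lam : ℝ)
    (hL2φ : ∀ i, MemLp (fun ω => φ (X ω) i) 2 μ)
    (hL2ψ : ∀ i, MemLp (fun ω => ψ (X ω) i) 2 μ)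
    (Sφ : Matrix (Fin k) (Fin k) ℝ)
    (hSφ : Sφ = Matrix.of fun i j => ∫ ω, φ (X ω) i * φ (X ω) j ∂μ)
    (Sψ : Matrix (Fin l) (Fin l) ℝ)
    (hSψ : Sψ = Matrix.of fun i j => ∫ ω, ψ (X ω) i * ψ (X ω) j ∂μ)
    (Sφψ : Matrix (Fin k) (Fin l) ℝ)
    (hSφψ : Sφψ = Matrix.of fun i j => ∫ ω, φ (X ω) i * ψ (X ω) j ∂μ)
    (Aφ : Matrix (Fin k) (Fin k) ℝ)
    (hAφ : Aφ = (Sφ + lam • (1 : Matrix (Fin k) (Fin k) ℝ))⁻¹)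
    (Aψ : Matrix (Fin l) (Fin l) ℝ)
    (hAψ : Aψ = (Sψ + lam • (1 : Matrix (Fin l) (Fin l) ℝ))⁻¹) :
    (∫ p : Ω × Ω,
        (φ (X p.1) ⬝ᵥ (Aφ *ᵥ φ (X p.2)) - ψ (X p.1) ⬝ᵥ (Aψ *ᵥ ψ (X p.2))) ^ 2
        ∂(μ.prod μ))
      = Matrix.trace (Aφ * Sφ * Aφ * Sφ) + Matrix.trace (Aψ * Sψ * Aψ * Sψ)
        - 2 * Matrix.trace (Aφ * Sφψ * Aψ * Sφψᵀ) := by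
  set F := fun ω => φ (X ω)
  set G := fun ω => ψ (X ω)
  replace hSφ : Sφ = crossMoment μ F F := hSφ
  replace hSψ : Sψ = crossMoment μ G G := hSψ
  replace hSφψ : Sφψ = crossMoment μ F G := hSφψ
  have hSφ_symm : Sφ.IsSymm := hSφ ▸ isSymm_crossMoment_self μ F
  have hSψ_symm : Sψ.IsSymm := hSψ ▸ isSymm_crossMoment_self μ G
  have hAφ_symm : Aφ.IsSymm := hAφ ▸ (hSφ_symm.add (isSymm_one.smul lam)).inv
  have hAψ_symm : Aψ.IsSymm := hAψ ▸ (hSψ_symm.add (isSymm_one.smul lam)).inv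
  have hsq : ∀ a b : ℝ, (a - b) ^ 2 = a * a + b * b - 2 * (a * b) := fun a b => by ring
  have hφφ := integrable_dotProduct_mulVec_mul_dotProduct_mulVec hL2φ hL2φ hL2φ hL2φ Aφ Aφ
  have hψψ := integrable_dotProduct_mulVec_mul_dotProduct_mulVec hL2ψ hL2ψ hL2ψ hL2ψ Aψ Aψ
  have hφψ := integrable_dotProduct_mulVec_mul_dotProduct_mulVec hL2φ hL2ψ hL2φ hL2ψ Aφ Aψ
  simp only [hsq]
  rw [integral_sub (by exact hφφ.add hψψ) (hφψ.const_mul 2), integral_add hφφ hψψ,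
    integral_const_mul,
    integral_dotProduct_mulVec_mul_dotProduct_mulVec hL2φ hL2φ hL2φ hL2φ,
    integral_dotProduct_mulVec_mul_dotProduct_mulVec hL2ψ hL2ψ hL2ψ hL2ψ,
    integral_dotProduct_mulVec_mul_dotProduct_mulVec hL2φ hL2ψ hL2φ hL2ψ,
    ← hSφ, ← hSψ, ← hSφψ, hSφ_symm.eq, hSψ_symm.eq, hAφ_symm.eq, hAψ_symm.eq]

/-- Closed form of the GULP distance in terms of (cross-)covariance matrices. -/
theorem stmt2 {Ω : Type*} [MeasurableSpace Ω] (μ : Measure Ω) [IsProbabilityMeasure μ]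
    {d k l : ℕ} (X : Ω → (Fin d → ℝ))
    (φ : (Fin d → ℝ) → (Fin k → ℝ)) (ψ : (Fin d → ℝ) → (Fin l → ℝ))
    (lam : ℝ) (hlam : 0 ≤ lam)
    (hmeasφ : Measurable fun ω => φ (X ω)) (hmeasψ : Measurable fun ω => ψ (X ω))
    (hL2φ : ∀ i, MemLp (fun ω => φ (X ω) i) 2 μ)
    (hL2ψ : ∀ i, MemLp (fun ω => ψ (X ω) i) 2 μ)
    (hcentφ : ∀ i, ∫ ω, φ (X ω) i ∂μ = 0) (hcentψ : ∀ i, ∫ ω, ψ (X ω) i ∂μ = 0)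
    (Sφ : Matrix (Fin k) (Fin k) ℝ)
    (hSφ : Sφ = Matrix.of fun i j => ∫ ω, φ (X ω) i * φ (X ω) j ∂μ)
    (Sψ : Matrix (Fin l) (Fin l) ℝ)
    (hSψ : Sψ = Matrix.of fun i j => ∫ ω, ψ (X ω) i * ψ (X ω) j ∂μ)
    (Sφψ : Matrix (Fin k) (Fin l) ℝ)
    (hSφψ : Sφψ = Matrix.of fun i j => ∫ ω, φ (X ω) i * ψ (X ω) j ∂μ)
    (Aφ : Matrix (Fin k) (Fin k) ℝ)
    (hAφ : Aφ = (Sφ + lam • (1 : Matrix (Fin k) (Fin k) ℝ))⁻¹)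
    (Aψ : Matrix (Fin l) (Fin l) ℝ)
    (hAψ : Aψ = (Sψ + lam • (1 : Matrix (Fin l) (Fin l) ℝ))⁻¹) :
    (∫ p : Ω × Ω,
        (φ (X p.1) ⬝ᵥ (Aφ *ᵥ φ (X p.2)) - ψ (X p.1) ⬝ᵥ (Aψ *ᵥ ψ (X p.2))) ^ 2
        ∂(μ.prod μ))
      = Matrix.trace (Aφ * Sφ * Aφ * Sφ) + Matrix.trace (Aψ * Sψ * Aψ * Sψ)
        - 2 * Matrix.trace (Aφ * Sφψ * Aψ * Sφψᵀ) :=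
  stmt2_general μ X φ ψ lam hL2φ hL2ψ Sφ hSφ Sψ hSψ Sφψ hSφψ Aφ hAφ Aψ hAψ
end

section
/- Let U ∈ R^{k×k} be an orthogonal matrix and Σ_φ, Σ_ψ ∈ R^{k×k} symmetric positive semidefinite matrices such that Σ_φ(Σ_φ + λI)⁻¹ = U Σ_ψ(Σ_ψ + λI)⁻¹ Uᵀ for some λ > 0. Then Uᵀ(Σ_φ + λI)^{-1/2}U = (Σ_ψ + λI)^{-1/2}. -/
/-!
Since `Σ (Σ + λ I)⁻¹ = I - λ (Σ + λ I)⁻¹`, the hypothesis says that `(Σ_φ + λ I)⁻¹` and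
`U (Σ_ψ + λ I)⁻¹ Uᵀ` agree, hence so do `Σ_φ + λ I` and `U (Σ_ψ + λ I) Uᵀ`. Conjugating the square
root of a positive semidefinite matrix by an orthogonal matrix gives a positive semidefinite square
root of the conjugate, so by uniqueness of such roots `Uᵀ (Σ_φ + λ I)^{1/2} U = (Σ_ψ + λ I)^{1/2}`;
inverting both sides finishes the proof.
-/

open Matrix

/-- The positive semidefinite square root of a positive semidefinite matrix (the definition
`Matrix.PosSemidef.sqrt` of the older Mathlib, which has since been removed). -/
noncomputable def Matrix.PosSemidef.sqrt {n : Type*} [Fintype n] [DecidableEq n] {𝕜 : Type*}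
    [RCLike 𝕜] [PartialOrder 𝕜] {A : Matrix n n 𝕜} (hA : A.PosSemidef) : Matrix n n 𝕜 :=
  (hA.1.eigenvectorUnitary : Matrix n n 𝕜) * diagonal ((↑) ∘ (√·) ∘ hA.1.eigenvalues) *
    (star (hA.1.eigenvectorUnitary : Matrix n n 𝕜))

open scoped MatrixOrder

namespace Matrix

variable {n : Type*} [Fintype n] [DecidableEq n]

theorem mul_inv_add_smul_one {K : Type*} [Field K] {S : Matrix n n K} {c : K}
    (h : IsUnit (S + c • 1).det) : S * (S + c • 1)⁻¹ = 1 - c • (S + c • 1)⁻¹ := by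
  rw [eq_sub_iff_add_eq, ← smul_one_mul c (S + c • 1)⁻¹, ← add_mul, mul_nonsing_inv _ h]

theorem inv_transpose_mul_mul {R : Type*} [CommRing R] {U : Matrix n n R}
    (hU : Uᵀ * U = 1) (M : Matrix n n R) : (Uᵀ * M * U)⁻¹ = Uᵀ * M⁻¹ * U := by
  rw [mul_inv_rev, mul_inv_rev, inv_eq_left_inv hU, inv_eq_right_inv hU, mul_assoc]

theorem transpose_mul_mul_transpose_mul {R : Type*} [CommRing R] {U : Matrix n n R}
    (hU : Uᵀ * U = 1) (M : Matrix n n R) : Uᵀ * (U * M * Uᵀ) * U = M := by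
  rw [mul_assoc, mul_assoc, hU, mul_one, ← mul_assoc, hU, one_mul]

theorem transpose_mul_add_smul_one_mul_eq {K : Type*} [Field K] {S T U : Matrix n n K} {c : K}
    (hc : c ≠ 0) (hS : IsUnit (S + c • 1).det) (hT : IsUnit (T + c • 1).det) (hU : Uᵀ * U = 1)
    (h : S * (S + c • 1)⁻¹ = U * (T * (T + c • 1)⁻¹) * Uᵀ) :
    Uᵀ * (S + c • 1) * U = T + c • 1 := by
  rw [mul_inv_add_smul_one hS, mul_inv_add_smul_one hT, mul_sub, sub_mul, mul_one,
    mul_eq_one_comm.mp hU, Matrix.mul_smul, Matrix.smul_mul] at h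
  have hinv : (S + c • 1)⁻¹ = (Uᵀᵀ * (T + c • 1) * Uᵀ)⁻¹ := by
    rw [inv_transpose_mul_mul (by rw [transpose_transpose]; exact mul_eq_one_comm.mp hU),
      transpose_transpose]
    exact smul_right_injective _ hc (sub_right_injective h)
  rw [inv_inj hinv hS, transpose_transpose, transpose_mul_mul_transpose_mul hU]

namespace PosSemidef

theorem sqrt_eq_cfcSqrt {A : Matrix n n ℝ} (hA : A.PosSemidef) : hA.sqrt = CFC.sqrt A := by
  rw [CFC.sqrt_eq_real_sqrt A hA.nonneg, cfcₙ_eq_cfc, hA.1.cfc_eq]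
  rfl

theorem transpose_mul_sqrt_mul {A B U : Matrix n n ℝ} (hA : A.PosSemidef) (hB : B.PosSemidef)
    (hU : Uᵀ * U = 1) (hAB : Uᵀ * A * U = B) : Uᵀ * hA.sqrt * U = hB.sqrt := by
  have hUUt : U * Uᵀ = 1 := mul_eq_one_comm.mp hU
  rw [sqrt_eq_cfcSqrt, sqrt_eq_cfcSqrt]
  refine (CFC.sqrt_unique ?_ ?_).symm
  · calc Uᵀ * CFC.sqrt A * U * (Uᵀ * CFC.sqrt A * U)
        = Uᵀ * (CFC.sqrt A * (U * Uᵀ) * CFC.sqrt A) * U := by simp only [mul_assoc]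
      _ = B := by rw [hUUt, mul_one, CFC.sqrt_mul_sqrt_self A hA.nonneg, hAB]
  · simpa using ((CFC.sqrt_nonneg A).posSemidef.conjTranspose_mul_mul_same U).nonneg

end PosSemidef

end Matrix

theorem stmt9 {k : ℕ} (lam : ℝ) (hlam : 0 < lam)
    (Sφ Sψ : Matrix (Fin k) (Fin k) ℝ) (hSφ : Sφ.PosSemidef) (hSψ : Sψ.PosSemidef)
    (U : Matrix (Fin k) (Fin k) ℝ) (hU : Uᵀ * U = 1)
    (h1 : (Sφ + lam • (1 : Matrix (Fin k) (Fin k) ℝ)).PosSemidef)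
    (h2 : (Sψ + lam • (1 : Matrix (Fin k) (Fin k) ℝ)).PosSemidef)
    (heq : Sφ * (Sφ + lam • (1 : Matrix (Fin k) (Fin k) ℝ))⁻¹
         = U * (Sψ * (Sψ + lam • (1 : Matrix (Fin k) (Fin k) ℝ))⁻¹) * Uᵀ) :
    Uᵀ * (h1.sqrt)⁻¹ * U = (h2.sqrt)⁻¹ := by
  have hlamI : (lam • (1 : Matrix (Fin k) (Fin k) ℝ)).PosDef := PosDef.one.smul hlam
  have hA := (PosDef.posSemidef_add hSφ hlamI).det_pos.ne'.isUnit
  have hB := (PosDef.posSemidef_add hSψ hlamI).det_pos.ne'.isUnit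
  rw [← inv_transpose_mul_mul hU, h1.transpose_mul_sqrt_mul h2 hU
    (transpose_mul_add_smul_one_mul_eq hlam.ne' hA hB hU heq)]
end

section
/- Let V ∈ R^{k×n}, W ∈ R^{ℓ×n}, and λ > 0. Then tr((VVᵀ + λI)⁻¹VWᵀ(WWᵀ + λI)⁻¹WVᵀ) = tr((VᵀV + λI)⁻¹VᵀV(WᵀW + λI)⁻¹WᵀW). -/
open Matrix

lemma smulOne_posDef {n : ℕ} {lam : ℝ} (hlam : 0 < lam) :
    (lam • (1 : Matrix (Fin n) (Fin n) ℝ)).PosDef := by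
  rw [smul_one_eq_diagonal]
  exact posDef_diagonal_iff.mpr fun _ => hlam

lemma reg_posDef {m n : ℕ} (A : Matrix (Fin m) (Fin n) ℝ) {lam : ℝ} (hlam : 0 < lam) :
    (Aᵀ * A + lam • (1 : Matrix (Fin n) (Fin n) ℝ)).PosDef := by
  have h1 : (Aᵀ * A).PosSemidef := by
    simpa using posSemidef_conjTranspose_mul_self A
  exact Matrix.PosDef.posSemidef_add h1 (smulOne_posDef hlam)

lemma push_through {m n : ℕ} (A : Matrix (Fin m) (Fin n) ℝ) {lam : ℝ} (hlam : 0 < lam) :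
    (A * Aᵀ + lam • (1 : Matrix (Fin m) (Fin m) ℝ))⁻¹ * A
      = A * (Aᵀ * A + lam • (1 : Matrix (Fin n) (Fin n) ℝ))⁻¹ := by
  have hG := (reg_posDef A hlam).isUnit
  have hK : ((A * Aᵀ + lam • (1 : Matrix (Fin m) (Fin m) ℝ))).PosDef := by
    have := reg_posDef Aᵀ hlam
    simpa using this
  have key : (A * Aᵀ + lam • (1 : Matrix (Fin m) (Fin m) ℝ)) * A
      = A * (Aᵀ * A + lam • (1 : Matrix (Fin n) (Fin n) ℝ)) := by
    rw [Matrix.add_mul, Matrix.mul_add, Matrix.smul_mul, Matrix.mul_smul, Matrix.one_mul,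
      Matrix.mul_one, Matrix.mul_assoc]
  have hGd := (Matrix.isUnit_iff_isUnit_det _).mp hG
  have hKd := (Matrix.isUnit_iff_isUnit_det _).mp hK.isUnit
  calc (A * Aᵀ + lam • (1 : Matrix (Fin m) (Fin m) ℝ))⁻¹ * A
      = (A * Aᵀ + lam • 1)⁻¹ * A
        * ((Aᵀ * A + lam • 1) * (Aᵀ * A + lam • 1)⁻¹) := by
        rw [Matrix.mul_nonsing_inv _ hGd, Matrix.mul_one]
    _ = (A * Aᵀ + lam • 1)⁻¹ * (A * (Aᵀ * A + lam • 1)) * (Aᵀ * A + lam • 1)⁻¹ := by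
        simp only [Matrix.mul_assoc]
    _ = (A * Aᵀ + lam • 1)⁻¹ * ((A * Aᵀ + lam • 1) * A) * (Aᵀ * A + lam • 1)⁻¹ := by
        rw [key]
    _ = A * (Aᵀ * A + lam • 1)⁻¹ := by
        rw [← Matrix.mul_assoc ((A * Aᵀ + lam • 1)⁻¹), Matrix.nonsing_inv_mul _ hKd,
          Matrix.one_mul]

theorem stmt16 {k l n : ℕ} (V : Matrix (Fin k) (Fin n) ℝ) (W : Matrix (Fin l) (Fin n) ℝ)
    (lam : ℝ) (hlam : 0 < lam) :
    Matrix.trace ((V * Vᵀ + lam • (1 : Matrix (Fin k) (Fin k) ℝ))⁻¹ * (V * Wᵀ)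
        * (W * Wᵀ + lam • (1 : Matrix (Fin l) (Fin l) ℝ))⁻¹ * (W * Vᵀ))
      = Matrix.trace ((Vᵀ * V + lam • (1 : Matrix (Fin n) (Fin n) ℝ))⁻¹ * (Vᵀ * V)
        * (Wᵀ * W + lam • (1 : Matrix (Fin n) (Fin n) ℝ))⁻¹ * (Wᵀ * W)) := by
  have hV := push_through V hlam
  have hW := push_through W hlam
  have hWt : Wᵀ * (W * Wᵀ + lam • (1 : Matrix (Fin l) (Fin l) ℝ))⁻¹
      = (Wᵀ * W + lam • (1 : Matrix (Fin n) (Fin n) ℝ))⁻¹ * Wᵀ := by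
    have := congrArg Matrix.transpose hW
    simpa [Matrix.transpose_mul, Matrix.transpose_nonsing_inv, Matrix.transpose_add,
      Matrix.transpose_smul, Matrix.mul_assoc] using this
  have lhs_eq : (V * Vᵀ + lam • (1 : Matrix (Fin k) (Fin k) ℝ))⁻¹ * (V * Wᵀ)
        * (W * Wᵀ + lam • (1 : Matrix (Fin l) (Fin l) ℝ))⁻¹ * (W * Vᵀ)
      = V * ((Vᵀ * V + lam • (1 : Matrix (Fin n) (Fin n) ℝ))⁻¹
        * ((Wᵀ * W + lam • (1 : Matrix (Fin n) (Fin n) ℝ))⁻¹ * (Wᵀ * (W * Vᵀ)))) := by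
    rw [← Matrix.mul_assoc _ V Wᵀ, hV]
    rw [Matrix.mul_assoc, Matrix.mul_assoc, Matrix.mul_assoc, ← Matrix.mul_assoc Wᵀ, hWt]
    rw [Matrix.mul_assoc]
  have comm : (Vᵀ * V + lam • (1 : Matrix (Fin n) (Fin n) ℝ))⁻¹ * (Vᵀ * V)
      = (Vᵀ * V) * (Vᵀ * V + lam • (1 : Matrix (Fin n) (Fin n) ℝ))⁻¹ := by
    have h := (reg_posDef V hlam).isUnit
    letI := h.invertible
    have key : (Vᵀ * V + lam • (1 : Matrix (Fin n) (Fin n) ℝ)) * (Vᵀ * V)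
        = (Vᵀ * V) * (Vᵀ * V + lam • (1 : Matrix (Fin n) (Fin n) ℝ)) := by
      rw [Matrix.add_mul, Matrix.mul_add, Matrix.smul_mul, Matrix.mul_smul, Matrix.one_mul,
      Matrix.mul_one, Matrix.mul_assoc]
    rw [Matrix.inv_mul_eq_iff_eq_mul_of_invertible, ← Matrix.mul_assoc, key,
      Matrix.mul_assoc, Matrix.mul_nonsing_inv _ ((Matrix.isUnit_iff_isUnit_det _).mp h),
      Matrix.mul_one]
  rw [lhs_eq, Matrix.trace_mul_comm V, comm,
    Matrix.mul_assoc (Vᵀ * V), Matrix.mul_assoc (Vᵀ * V), Matrix.trace_mul_comm (Vᵀ * V)]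
  congr 1
  simp [Matrix.mul_assoc]
end
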